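/- Let A be an algebra and R, S reflexive compatible binary relations on A. Then [R,S|1] ⊆ (S ∩ (R⁻ ∘ R))*, where R⁻ is the converse of R, ∘ is relational composition, and * is transitive closure. -/

import Mathlib

open FirstOrder Language

universe u

/-- A binary relation on a structure `A` is compatible (admissible) if it is preserved
by every operation (function symbol) of the language. -/
def Compatible (L : Language) {A : Type u} [L.Structure A] (R : A → A → Prop) : Prop :=
  ∀ (n : ℕ) (f : L.Functions n) (a b : Fin n → A),
    (∀ i, R (a i) (b i)) → R (Structure.funMap f a) (Structure.funMap f b)

/-- `(x, y; z, w) ∈ M(R, S)`: there is a term `t` and tuples `a R a'`, `b S b'` with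
`x = t(a,b)`, `y = t(a,b')`, `z = t(a',b)`, `w = t(a',b')`. -/
def InM (L : Language) {A : Type u} [L.Structure A] (R S : A → A → Prop)
    (x y z w : A) : Prop :=
  ∃ (n m : ℕ) (t : L.Term (Fin n ⊕ Fin m)) (a a' : Fin n → A) (b b' : Fin m → A),
    (∀ i, R (a i) (a' i)) ∧ (∀ j, S (b j) (b' j)) ∧
      x = t.realize (Sum.elim a b) ∧ y = t.realize (Sum.elim a b') ∧
      z = t.realize (Sum.elim a' b) ∧ w = t.realize (Sum.elim a' b')

/-- `[R, S | 1]`: the transitive closure of `{(z,w) : (x,x;z,w) ∈ M(R,S) for some x}`. -/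
def comm1 (L : Language) {A : Type u} [L.Structure A] (R S : A → A → Prop) :
    A → A → Prop :=
  Relation.TransGen (fun z w => ∃ x, InM L R S x x z w)

/-- Relational composition. -/
def rcomp {A : Type u} (R S : A → A → Prop) : A → A → Prop :=
  fun a c => ∃ b, R a b ∧ S b c

/-- Converse of a relation. -/
def rconv {A : Type u} (R : A → A → Prop) : A → A → Prop := fun a b => R b a

/-- Intersection of relations. -/
def rinter {A : Type u} (R S : A → A → Prop) : A → A → Prop := fun a b => R a b ∧ S a b

/-- A congruence: a compatible equivalence relation. -/
def IsCongruence (L : Language) {A : Type u} [L.Structure A] (θ : A → A → Prop) : Prop :=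
  Equivalence θ ∧ Compatible L θ

/-- A tolerance: a reflexive symmetric compatible relation. -/
def IsTolerance (L : Language) {A : Type u} [L.Structure A] (T : A → A → Prop) : Prop :=
  Reflexive T ∧ Symmetric T ∧ Compatible L T

/-- `Cg R`: the smallest congruence containing `R` (intersection of all congruences ⊇ R). -/
def Cg (L : Language) {A : Type u} [L.Structure A] (R : A → A → Prop) : A → A → Prop :=
  fun a b => ∀ θ : A → A → Prop, IsCongruence L θ → (∀ x y, R x y → θ x y) → θ a b

/-- `R°`: the smallest tolerance containing `R`. -/
def tolC (L : Language) {A : Type u} [L.Structure A] (R : A → A → Prop) : A → A → Prop :=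
  fun a b => ∀ T : A → A → Prop, IsTolerance L T → (∀ x y, R x y → T x y) → T a b

/-- `K(R,S;V) = {(z,w) : ∃ x y, (x,y;z,w) ∈ M(R,S) ∧ x V y}`. -/
def Kop (L : Language) {A : Type u} [L.Structure A] (R S V : A → A → Prop) :
    A → A → Prop :=
  fun z w => ∃ x y, InM L R S x y z w ∧ V x y

/-- The join `γ ∨ D`: the smallest congruence containing both `γ` and `D`. -/
def cgJoin (L : Language) {A : Type u} [L.Structure A] (γ D : A → A → Prop) :
    A → A → Prop :=
  fun a b => ∀ θ : A → A → Prop, IsCongruence L θ → (∀ x y, γ x y → θ x y) →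
    (∀ x y, D x y → θ x y) → θ a b

variable {L : Language} {A : Type u} [L.Structure A]

/-! Term operations preserve a reflexive compatible relation coordinatewise. For a generator
`(x, x; z, w)` of `[R, S | 1]`, comparing the bottom row gives `z S w`, and comparing the two
columns gives `x R z` and `x R w`, so `x` witnesses `(z, w) ∈ R⁻ ∘ R`. -/

theorem Compatible.realize_term {R : A → A → Prop} (hRc : Compatible L R) {α : Type*}
    (t : L.Term α) {u v : α → A} (h : ∀ i, R (u i) (v i)) :
    R (t.realize u) (t.realize v) := by
  induction t with
  | var i => exact h i
  | func f ts ih => exact hRc _ f _ _ ih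

namespace InM

variable {R S : A → A → Prop} {x y z w : A}

theorem rel_columns (hRrefl : Reflexive R) (hRc : Compatible L R)
    (h : InM L R S x y z w) : R x z ∧ R y w := by
  obtain ⟨n, m, t, a, a', b, b', hR, -, rfl, rfl, rfl, rfl⟩ := h
  constructor <;>
    exact hRc.realize_term t (by rintro (i | j); exacts [hR i, hRrefl _])

theorem rel_bottom_row (hSrefl : Reflexive S) (hSc : Compatible L S)
    (h : InM L R S x y z w) : S z w := by
  obtain ⟨n, m, t, a, a', b, b', -, hS, -, -, rfl, rfl⟩ := h
  exact hSc.realize_term t (by rintro (i | j); exacts [hSrefl _, hS j])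

end InM

theorem stmt5 (R S : A → A → Prop) (hRrefl : Reflexive R) (hSrefl : Reflexive S)
    (hRc : Compatible L R) (hSc : Compatible L S) :
    ∀ a b, comm1 L R S a b →
      Relation.TransGen (rinter S (rcomp (rconv R) R)) a b := by
  refine fun a b h => Relation.TransGen.mono ?_ a b h
  rintro z w ⟨x, hx⟩
  obtain ⟨hxz, hxw⟩ := hx.rel_columns hRrefl hRc
  exact ⟨hx.rel_bottom_row hSrefl hSc, x, hxz, hxw⟩
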